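/- For every Γ : Type, A1 : Γ → Type and A2 : (Σ x : Γ, A1 x) → Type there is a function isFibΠ : isFib A1 → isFib A2 → isFib (fun x => (a1 : A1 x) → A2 ⟨x, a1⟩), and it is stable under reindexing: for every γ : Δ → Γ, (isFibΠ α1 α2)[γ] = isFibΠ (α1[γ]) (α2[γ ×' id]), where γ ×' id : (Σ x : Δ, A1 (γ x)) → (Σ x : Γ, A1 x) sends ⟨x, a⟩ to ⟨γ x, a⟩. -/

import Mathlib

namespace CCHM

variable {I : Type}

/-- The two endpoints of the interval: `false ↦ i0`, `true ↦ i1`;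
negation `!e` swaps the endpoints. -/
def pt (i0 i1 : I) : Bool → I := fun e => bif e then i1 else i0

/-- A composition structure for an `I`-indexed family of types:
any cofibrant partial path extended at endpoint `e` is extended at the other
endpoint `!e`. -/
def Comp (i0 i1 : I) (cof : Prop → Prop) (e : Bool) (A : I → Type) : Type :=
  (φ : Prop) → cof φ → (f : φ → (i : I) → A i) →
    (a0 : A (pt i0 i1 e)) → (∀ u : φ, f u (pt i0 i1 e) = a0) →
    { a1 : A (pt i0 i1 (!e)) // ∀ u : φ, f u (pt i0 i1 (!e)) = a1 }

/-- A (CCHM) fibration structure on a family `A : Γ → Type`. -/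
def isFib (i0 i1 : I) (cof : Prop → Prop) {Γ : Type} (A : Γ → Type) : Type :=
  (e : Bool) → (p : I → Γ) → Comp i0 i1 cof e (fun i => A (p i))

/-- Reindexing of fibration structures: `α[γ] e p := α e (γ ∘ p)`. -/
def reind (i0 i1 : I) (cof : Prop → Prop) {Δ Γ : Type} {A : Γ → Type}
    (γ : Δ → Γ) (α : isFib i0 i1 cof A) : isFib i0 i1 cof (fun x => A (γ x)) :=
  fun e p => α e (fun i => γ (p i))

/-
CCHM's composition for Π-types. To compose a partial family of functions from `e` to `!e` at an
argument `a : A1 (p (!e))`, first fill `a` backwards into a path over `p` using the fibration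
structure on `A1` (with the empty system, so it is a filler whose only constraint is to start at
`a`), then compose in `A2` along the resulting path in the total space, applying the given
functions pointwise to the filler. Everything is built from the path `p` alone, so the construction
commutes with reindexing definitionally.
-/

/-- Contracts the interval onto the endpoint `e`. -/
def connection (cnx dsj : I → I → I) (e : Bool) : I → I → I :=
  fun i j => bif e then dsj i j else cnx i j

section Connection

variable {i0 i1 : I} {cnx dsj : I → I → I}
  (ax3 : ∀ x, cnx i0 x = i0 ∧ cnx x i0 = i0 ∧ cnx i1 x = x ∧ cnx x i1 = x)
  (ax4 : ∀ x, dsj i0 x = x ∧ dsj x i0 = x ∧ dsj i1 x = i1 ∧ dsj x i1 = i1)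
include ax3 ax4

theorem connection_pt_left (e : Bool) (j : I) :
    connection cnx dsj e (pt i0 i1 e) j = pt i0 i1 e := by
  cases e
  exacts [(ax3 j).1, (ax4 j).2.2.1]

theorem connection_pt_right (e : Bool) (i : I) :
    connection cnx dsj e i (pt i0 i1 e) = pt i0 i1 e := by
  cases e
  exacts [(ax3 i).2.1, (ax4 i).2.2.2]

theorem connection_pt_not_right (e : Bool) (i : I) :
    connection cnx dsj e i (pt i0 i1 (!e)) = i := by
  cases e
  exacts [(ax3 i).2.2.2, (ax4 i).2.1]

end Connection

theorem cof_eq_pt {i0 i1 : I} {cof : Prop → Prop} (ax5 : ∀ i : I, cof (i = i0) ∧ cof (i = i1))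
    (e : Bool) (i : I) : cof (i = pt i0 i1 e) := by
  cases e
  exacts [(ax5 i).1, (ax5 i).2]

theorem cast_congrArg_apply {X : Type} {B : X → Type} (g : (x : X) → B x) {x y : X}
    (h : x = y) : cast (congrArg B h) (g x) = g y := by
  subst h
  rfl

section Fill

variable {i0 i1 : I} {cof : Prop → Prop} {cnx dsj : I → I → I}
  (ax3 : ∀ x, cnx i0 x = i0 ∧ cnx x i0 = i0 ∧ cnx i1 x = x ∧ cnx x i1 = x)
  (ax4 : ∀ x, dsj i0 x = x ∧ dsj x i0 = x ∧ dsj i1 x = i1 ∧ dsj x i1 = i1)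
  (ax5 : ∀ i : I, cof (i = i0) ∧ cof (i = i1))
  {Γ : Type} {A : Γ → Type}

/-- Composing along `j ↦ p (connection e i j)`, a path from `p e` to `p i`, under the system
`i = e` is what makes the filler start at `a`. -/
def transportFill (α : isFib i0 i1 cof A) (e : Bool) (p : I → Γ) (a : A (p (pt i0 i1 e)))
    (i : I) : A (p i) :=
  let B : I → Type := fun k => A (p k)
  let start (j : I) (h : i = pt i0 i1 e) : A (p (connection cnx dsj e i j)) :=
    cast (congrArg B (by rw [h, connection_pt_left ax3 ax4])) a
  cast (congrArg B (connection_pt_not_right ax3 ax4 e i))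
    (α e (fun j => p (connection cnx dsj e i j)) (i = pt i0 i1 e) (cof_eq_pt ax5 e i)
      (fun h j => start j h) (cast (congrArg B (connection_pt_right ax3 ax4 e i).symm) a)
      (fun _ => rfl)).1

theorem transportFill_pt (α : isFib i0 i1 cof A) (e : Bool) (p : I → Γ)
    (a : A (p (pt i0 i1 e))) : transportFill ax3 ax4 ax5 α e p a (pt i0 i1 e) = a := by
  unfold transportFill
  dsimp only
  rw [← (α e _ _ _ _ _ _).2 rfl, cast_cast, cast_eq]

end Fill

section Pi

variable {i0 i1 : I} {cof : Prop → Prop} {cnx dsj : I → I → I}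
  (ax3 : ∀ x, cnx i0 x = i0 ∧ cnx x i0 = i0 ∧ cnx i1 x = x ∧ cnx x i1 = x)
  (ax4 : ∀ x, dsj i0 x = x ∧ dsj x i0 = x ∧ dsj i1 x = i1 ∧ dsj x i1 = i1)
  (ax5 : ∀ i : I, cof (i = i0) ∧ cof (i = i1))

def isFibPi {Γ : Type} {A1 : Γ → Type} {A2 : (Σ x : Γ, A1 x) → Type}
    (α1 : isFib i0 i1 cof A1) (α2 : isFib i0 i1 cof A2) :
    isFib i0 i1 cof (fun x => (a1 : A1 x) → A2 ⟨x, a1⟩) :=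
  fun e p φ cφ f g0 hg0 =>
    let fill (a : A1 (p (pt i0 i1 (!e)))) : I → Σ x : Γ, A1 x :=
      fun i => ⟨p i, transportFill ax3 ax4 ax5 α1 (!e) p a i⟩
    let comp (a : A1 (p (pt i0 i1 (!e)))) :=
      α2 e (fill a) φ cφ (fun u i => f u i (fill a i).2) (g0 (fill a (pt i0 i1 e)).2)
        (fun u => congrFun (hg0 u) _)
    let ends (a : A1 (p (pt i0 i1 (!e)))) := transportFill_pt ax3 ax4 ax5 α1 (!e) p a
    ⟨fun a => cast (congrArg (fun b => A2 ⟨_, b⟩) (ends a)) (comp a).1,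
      fun u => funext fun a => by
        rw [← (comp a).2 u]
        exact (cast_congrArg_apply (f u (pt i0 i1 (!e))) (ends a)).symm⟩

theorem reind_isFibPi {Δ Γ : Type} {A1 : Γ → Type} {A2 : (Σ x : Γ, A1 x) → Type}
    (α1 : isFib i0 i1 cof A1) (α2 : isFib i0 i1 cof A2) (γ : Δ → Γ) :
    reind i0 i1 cof γ (isFibPi ax3 ax4 ax5 α1 α2) =
      isFibPi ax3 ax4 ax5 (reind i0 i1 cof γ α1)
        (reind i0 i1 cof (fun y : Σ x : Δ, A1 (γ x) => (⟨γ y.1, y.2⟩ : Σ x : Γ, A1 x)) α2) :=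
  rfl

end Pi

theorem fib_pi_general (i0 i1 : I) (cof : Prop → Prop)
    (cnx dsj : I → I → I)
    (ax3 : ∀ x, cnx i0 x = i0 ∧ cnx x i0 = i0 ∧ cnx i1 x = x ∧ cnx x i1 = x)
    (ax4 : ∀ x, dsj i0 x = x ∧ dsj x i0 = x ∧ dsj i1 x = i1 ∧ dsj x i1 = i1)
    (ax5 : ∀ i : I, cof (i = i0) ∧ cof (i = i1)) :
    ∃ isFibPi : {Γ : Type} → {A1 : Γ → Type} → {A2 : (Σ x : Γ, A1 x) → Type} →
        isFib i0 i1 cof A1 → isFib i0 i1 cof A2 →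
        isFib i0 i1 cof (fun x => (a1 : A1 x) → A2 ⟨x, a1⟩),
      ∀ (Δ Γ : Type) (A1 : Γ → Type) (A2 : (Σ x : Γ, A1 x) → Type)
        (α1 : isFib i0 i1 cof A1) (α2 : isFib i0 i1 cof A2) (γ : Δ → Γ),
        reind i0 i1 cof γ (isFibPi α1 α2) =
          isFibPi (reind i0 i1 cof γ α1)
            (reind i0 i1 cof
              (fun y : Σ x : Δ, A1 (γ x) => (⟨γ y.1, y.2⟩ : Σ x : Γ, A1 x)) α2) :=
  ⟨isFibPi ax3 ax4 ax5, fun _ _ _ _ α1 α2 γ => reind_isFibPi ax3 ax4 ax5 α1 α2 γ⟩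

/-- Fibration structures lift through Π-types, stably under reindexing. -/
theorem fib_pi (i0 i1 : I) (cof : Prop → Prop)
    (ax2 : i0 ≠ i1)
    (cnx dsj : I → I → I)
    (ax3 : ∀ x, cnx i0 x = i0 ∧ cnx x i0 = i0 ∧ cnx i1 x = x ∧ cnx x i1 = x)
    (ax4 : ∀ x, dsj i0 x = x ∧ dsj x i0 = x ∧ dsj i1 x = i1 ∧ dsj x i1 = i1)
    (ax5 : ∀ i : I, cof (i = i0) ∧ cof (i = i1))
    (ax6 : ∀ φ ψ : Prop, cof φ → cof ψ → cof (φ ∨ ψ)) :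
    ∃ isFibPi : {Γ : Type} → {A1 : Γ → Type} → {A2 : (Σ x : Γ, A1 x) → Type} →
        isFib i0 i1 cof A1 → isFib i0 i1 cof A2 →
        isFib i0 i1 cof (fun x => (a1 : A1 x) → A2 ⟨x, a1⟩),
      ∀ (Δ Γ : Type) (A1 : Γ → Type) (A2 : (Σ x : Γ, A1 x) → Type)
        (α1 : isFib i0 i1 cof A1) (α2 : isFib i0 i1 cof A2) (γ : Δ → Γ),
        reind i0 i1 cof γ (isFibPi α1 α2) =
          isFibPi (reind i0 i1 cof γ α1)
            (reind i0 i1 cof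
              (fun y : Σ x : Δ, A1 (γ x) => (⟨γ y.1, y.2⟩ : Σ x : Γ, A1 x)) α2) :=
  fib_pi_general i0 i1 cof cnx dsj ax3 ax4 ax5

end CCHM
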